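/- arXiv:2207.07479 — 6 statements merged into one kernel-verified Lean document; each statement's English description precedes it below -/
import Mathlib

section
/- The class of zones over a finite set of clocks X is closed under the three basic operations: if Z and Z' are zones then Z ∩ Z' is a zone; for every Y ⊆ X, the reset [Y]Z = {[Y]v : v ∈ Z} is a zone; and the future →Z = {v + δ : v ∈ Z, δ ∈ ℝ≥0} is a zone. -/
open Classical

namespace Timed

/-- A clock valuation assigns a nonnegative real to every clock. -/
abbrev Val (X : Type) := X → NNReal

/-- Time elapse on valuations: `(v+δ)(x) = v(x)+δ`. -/
noncomputable def addVal {X : Type} (v : Val X) (δ : NNReal) : Val X := fun x => v x + δ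

/-- Reset of the clocks in `Y` to `0`. -/
noncomputable def resetVal {X : Type} (Y : Set X) (v : Val X) : Val X :=
  fun x => if x ∈ Y then 0 else v x

/-- Comparison operators `<, ≤, =, ≥, >`. -/
inductive CmpOp | lt | le | eq | ge | gt

def CmpOp.holds : CmpOp → ℝ → ℝ → Prop
  | .lt, a, b => a < b
  | .le, a, b => a ≤ b
  | .eq, a, b => a = b
  | .ge, a, b => a ≥ b
  | .gt, a, b => a > b

/-- Clock constraints: finite conjunctions of `x ⋈ c` and `x - y ⋈ c` (and `true`). -/
inductive ClockConstraint (X : Type) where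
  | tt : ClockConstraint X
  | single : X → CmpOp → ℤ → ClockConstraint X
  | diag : X → X → CmpOp → ℤ → ClockConstraint X
  | conj : ClockConstraint X → ClockConstraint X → ClockConstraint X

def ClockConstraint.sat {X : Type} (v : Val X) : ClockConstraint X → Prop
  | .tt => True
  | .single x op c => op.holds (v x : ℝ) (c : ℝ)
  | .diag x y op c => op.holds ((v x : ℝ) - (v y : ℝ)) (c : ℝ)
  | .conj g₁ g₂ => g₁.sat v ∧ g₂.sat v

/-- `⟦g⟧`, the set of valuations satisfying `g`. -/
def sem {X : Type} (g : ClockConstraint X) : Set (Val X) := {v | g.sat v}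

/-- A zone is a set of valuations definable by a clock constraint. -/
def IsZone {X : Type} (Z : Set (Val X)) : Prop := ∃ g : ClockConstraint X, Z = sem g

/-- Future (time elapse) of a set of valuations. -/
def future {X : Type} (W : Set (Val X)) : Set (Val X) :=
  {w | ∃ v ∈ W, ∃ δ : NNReal, w = addVal v δ}

/-- Reset of a set of valuations: `[Y]W`. -/
def resetSet {X : Type} (Y : Set X) (W : Set (Val X)) : Set (Val X) :=
  resetVal Y '' W

/-- A timed automaton `(Q, X, q₀, T, F)`. -/
structure Automaton (Q X : Type) where
  init : Q
  trans : Set (Q × ClockConstraint X × Set X × Q)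
  final : Set Q

/-- `Post_t(W) = {v' : ∃ v ∈ W, ∃ δ ≥ 0, v ⊨ g ∧ v' = [Y]v + δ}` for `t = (q,g,Y,q')`. -/
def Post {Q X : Type} (t : Q × ClockConstraint X × Set X × Q) (W : Set (Val X)) :
    Set (Val X) :=
  {w | ∃ v ∈ W, ∃ δ : NNReal, t.2.1.sat v ∧ w = addVal (resetVal t.2.2.1 v) δ}

/-- The zero valuation. -/
def zeroVal (X : Type) : Val X := fun _ => 0

/-- One step of the semantics: a time elapse or a discrete transition. -/
inductive Step {Q X : Type} (A : Automaton Q X) : (Q × Val X) → (Q × Val X) → Prop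
  | delay (q : Q) (v : Val X) (δ : NNReal) : Step A (q, v) (q, addVal v δ)
  | disc {q : Q} {v : Val X} {g : ClockConstraint X} {R : Set X} {q₁ : Q}
      (ht : (q, g, R, q₁) ∈ A.trans) (hg : g.sat v) :
      Step A (q, v) (q₁, resetVal R v)

/-- A configuration is reachable if some finite run from `(q₀, 0)` ends in it. -/
def Reachable {Q X : Type} (A : Automaton Q X) (c : Q × Val X) : Prop :=
  Relation.ReflTransGen (Step A) (A.init, zeroVal X) c

/-- The initial zone `Z₀ = future {0}`. -/
def initZone (X : Type) : Set (Val X) := future {zeroVal X}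

/-- The set `S` of reachable symbolic states: least set containing `(q₀, Z₀)` and
closed under nonempty `Post`. -/
inductive SymbReach {Q X : Type} (A : Automaton Q X) : Q × Set (Val X) → Prop
  | init : SymbReach A (A.init, initZone X)
  | step {q : Q} {Z : Set (Val X)} {g : ClockConstraint X} {Y : Set X} {q' : Q}
      (h : SymbReach A (q, Z)) (ht : (q, g, Y, q') ∈ A.trans)
      (hne : Post (q, g, Y, q') Z ≠ ∅) :
      SymbReach A (q', Post (q, g, Y, q') Z)

/-- `N` is saturated w.r.t. the extrapolation operator `extra`. -/
def ExtraSaturated {Q X : Type} (A : Automaton Q X)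
    (extra : Q → Set (Val X) → Set (Val X)) (N : Set (Q × Set (Val X))) : Prop :=
  (∃ Z'', (A.init, Z'') ∈ N ∧ extra A.init (initZone X) ⊆ Z'') ∧
  ∀ q Z, (q, Z) ∈ N → ∀ g Y q', (q, g, Y, q') ∈ A.trans →
    Post (q, g, Y, q') Z ≠ ∅ →
    ∃ Z'', (q', Z'') ∈ N ∧ extra q' (Post (q, g, Y, q') Z) ⊆ Z''

/-- A `K`-bounded clock constraint: every `x ⋈ c` has `-K x ≤ c ≤ K x` and
every `x - y ⋈ c` has `-K y ≤ c ≤ K x`. -/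
def KBounded {X : Type} (K : X → ℕ) : ClockConstraint X → Prop
  | .tt => True
  | .single x _ c => -(K x : ℤ) ≤ c ∧ c ≤ (K x : ℤ)
  | .diag x y _ c => -(K y : ℤ) ≤ c ∧ c ≤ (K x : ℤ)
  | .conj g₁ g₂ => KBounded K g₁ ∧ KBounded K g₂

/-- A `K`-bounded zone. -/
def IsKBoundedZone {X : Type} (K : X → ℕ) (Z : Set (Val X)) : Prop :=
  ∃ g : ClockConstraint X, KBounded K g ∧ Z = sem g

/-- An `LU`-bounded clock constraint: every `x ⋈ c` has `-U x ≤ c ≤ L x` and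
every `x - y ⋈ c` has `-U y ≤ c ≤ L x`. -/
def LUBounded {X : Type} (L U : X → ℕ) : ClockConstraint X → Prop
  | .tt => True
  | .single x _ c => -(U x : ℤ) ≤ c ∧ c ≤ (L x : ℤ)
  | .diag x y _ c => -(U y : ℤ) ≤ c ∧ c ≤ (L x : ℤ)
  | .conj g₁ g₂ => LUBounded L U g₁ ∧ LUBounded L U g₂

/-- An `LU`-bounded zone. -/
def IsLUBoundedZone {X : Type} (L U : X → ℕ) (Z : Set (Val X)) : Prop :=
  ∃ g : ClockConstraint X, LUBounded L U g ∧ Z = sem g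

/-- A diagonal-free clock constraint. -/
def DiagFree {X : Type} : ClockConstraint X → Prop
  | .tt => True
  | .single _ _ _ => True
  | .diag _ _ _ _ => False
  | .conj g₁ g₂ => DiagFree g₁ ∧ DiagFree g₂

/-- Every atomic constraint `x ⋈ c` of the guard satisfies `c ≤ K x`. -/
def GuardKBounded {X : Type} (K : X → ℕ) : ClockConstraint X → Prop
  | .tt => True
  | .single x _ c => c ≤ (K x : ℤ)
  | .diag _ _ _ _ => True
  | .conj g₁ g₂ => GuardKBounded K g₁ ∧ GuardKBounded K g₂

/-- `LU`-boundedness of guards: `x < c`, `x ≤ c` need `c ≤ U x`; `x > d`, `x ≥ d`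
need `d ≤ L x`; `x = c` needs both. -/
def GuardLUBounded {X : Type} (L U : X → ℕ) : ClockConstraint X → Prop
  | .tt => True
  | .single x op c =>
      match op with
      | .lt => c ≤ (U x : ℤ)
      | .le => c ≤ (U x : ℤ)
      | .gt => c ≤ (L x : ℤ)
      | .ge => c ≤ (L x : ℤ)
      | .eq => c ≤ (U x : ℤ) ∧ c ≤ (L x : ℤ)
  | .diag _ _ _ _ => True
  | .conj g₁ g₂ => GuardLUBounded L U g₁ ∧ GuardLUBounded L U g₂

/-- A (strong timed) simulation: a preorder relating only configurations with the same
state, compatible with time elapses and discrete transitions. -/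
def IsSimulation {Q X : Type} (A : Automaton Q X)
    (R : (Q × Val X) → (Q × Val X) → Prop) : Prop :=
  (∀ c, R c c) ∧
  (∀ c₁ c₂ c₃, R c₁ c₂ → R c₂ c₃ → R c₁ c₃) ∧
  (∀ c c', R c c' → c.1 = c'.1) ∧
  (∀ q v v', R (q, v) (q, v') →
    (∀ δ : NNReal, R (q, addVal v δ) (q, addVal v' δ)) ∧
    (∀ g Y q₁, (q, g, Y, q₁) ∈ A.trans → g.sat v →
      g.sat v' ∧ R (q₁, resetVal Y v) (q₁, resetVal Y v')))

/-- Labels of run steps: a delay, or a discrete transition. -/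
inductive RunLabel (Q X : Type) where
  | delay : NNReal → RunLabel Q X
  | disc : Q × ClockConstraint X × Set X × Q → RunLabel Q X

/-- Finite runs with an explicit sequence of delays and transitions. -/
inductive LRun {Q X : Type} (A : Automaton Q X) :
    (Q × Val X) → List (RunLabel Q X) → (Q × Val X) → Prop
  | refl (c : Q × Val X) : LRun A c [] c
  | delay {q : Q} {v : Val X} (δ : NNReal) {l : List (RunLabel Q X)} {c' : Q × Val X}
      (h : LRun A (q, addVal v δ) l c') : LRun A (q, v) (RunLabel.delay δ :: l) c'
  | disc {q : Q} {v : Val X} {g : ClockConstraint X} {Y : Set X} {q₁ : Q}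
      {l : List (RunLabel Q X)} {c' : Q × Val X}
      (ht : (q, g, Y, q₁) ∈ A.trans) (hg : g.sat v)
      (h : LRun A (q₁, resetVal Y v) l c') :
      LRun A (q, v) (RunLabel.disc (q, g, Y, q₁) :: l) c'

/-- `N` is saturated w.r.t. the simulation `R`. -/
def SimSaturated {Q X : Type} (A : Automaton Q X)
    (R : (Q × Val X) → (Q × Val X) → Prop) (N : Set (Q × Set (Val X))) : Prop :=
  (∃ Z'', (A.init, Z'') ∈ N ∧ ∀ v ∈ initZone X, ∃ v' ∈ Z'', R (A.init, v) (A.init, v')) ∧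
  ∀ q Z, (q, Z) ∈ N → ∀ g Y q', (q, g, Y, q') ∈ A.trans →
    Post (q, g, Y, q') Z ≠ ∅ →
    ∃ Z'', (q', Z'') ∈ N ∧ ∀ v ∈ Post (q, g, Y, q') Z, ∃ v' ∈ Z'', R (q', v) (q', v')

/-- Atomic constraints, allowing the zero clock `x₀` on the left of a difference. -/
inductive Atom (X : Type) where
  | single : X → CmpOp → ℤ → Atom X
  | negSingle : X → CmpOp → ℤ → Atom X    -- `x₀ - y ⋈ c`
  | diag : X → X → CmpOp → ℤ → Atom X

def Atom.sat {X : Type} (v : Val X) : Atom X → Prop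
  | .single x op c => op.holds (v x : ℝ) (c : ℝ)
  | .negSingle y op c => op.holds (-(v y : ℝ)) (c : ℝ)
  | .diag x y op c => op.holds ((v x : ℝ) - (v y : ℝ)) (c : ℝ)

/-- `pre(φ, Y)` of an atomic constraint w.r.t. a reset set `Y`. -/
noncomputable def preAtom {X : Type} (Y : Set X) : Atom X → Set (Atom X)
  | .single x op c => if x ∈ Y then ∅ else {Atom.single x op c}
  | .negSingle y op c => if y ∈ Y then ∅ else {Atom.negSingle y op c}
  | .diag x y op c =>
      if x ∈ Y then (if y ∈ Y then ∅ else {Atom.negSingle y op c})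
      else (if y ∈ Y then {Atom.single x op c} else {Atom.diag x y op c})

/-- The set of atomic constraints of a guard. -/
def atomsOf {X : Type} : ClockConstraint X → Set (Atom X)
  | .tt => ∅
  | .single x op c => {Atom.single x op c}
  | .diag x y op c => {Atom.diag x y op c}
  | .conj g₁ g₂ => atomsOf g₁ ∪ atomsOf g₂

/-- One step of the fixpoint equations defining the constraint map `G`. -/
noncomputable def cmapStep {Q X : Type} (A : Automaton Q X)
    (G : Q → Set (Atom X)) (q : Q) : Set (Atom X) :=
  {φ | ∃ g Y q', (q, g, Y, q') ∈ A.trans ∧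
        (φ ∈ atomsOf g ∨ ∃ ψ ∈ G q', φ ∈ preAtom Y ψ)}

/-- The `G`-preorder: `(q,v) ≼_G (q,v')` iff for all `δ` and all `φ ∈ G q`,
`v+δ ⊨ φ` implies `v'+δ ⊨ φ` (only configurations with the same state are related). -/
def GPre {Q X : Type} (G : Q → Set (Atom X)) (c c' : Q × Val X) : Prop :=
  c.1 = c'.1 ∧
  ∀ δ : NNReal, ∀ φ ∈ G c.1, Atom.sat (addVal c.2 δ) φ → Atom.sat (addVal c'.2 δ) φ

end Timed
open Timed

/-!
Intersection is conjunction of constraints. Reset and future are projections along one clock: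
`[x]Z = {w | w x = 0} ∩ {w | ∃ r, w[x := r] ∈ Z}`, and `→Z` is the projection along `δ` of the
zone `{(w, δ) | δ ≤ w, w - δ ∈ Z}` over the clocks `X ∪ {δ}`. Projecting a clock `r` out of a
conjunction of difference constraints is Fourier–Motzkin elimination: every atom mentioning `r`
bounds `r` from below or above by a term `t + c`, and some `r ≥ 0` satisfies all of them iff every
lower bound lies below every upper bound, which is again a conjunction of difference constraints.
Recording strictness in a second coordinate of `ℝ ×ₗ Bool` turns each of these comparisons into a
single strict inequality.
-/

namespace Timed

variable {X X' : Type}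

namespace CmpOp

def swap : CmpOp → CmpOp
  | lt => gt
  | le => ge
  | eq => eq
  | ge => le
  | gt => lt

theorem holds_swap (op : CmpOp) (a b : ℝ) : op.swap.holds a b ↔ op.holds b a := by
  cases op <;> simp [swap, holds, eq_comm]

theorem holds_sub_iff (op : CmpOp) (a b c : ℝ) : op.holds (a - b) c ↔ op.holds a (b + c) := by
  cases op <;> simp only [holds] <;> constructor <;> intro <;> linarith

theorem holds_sub_comm (op : CmpOp) (a b c : ℝ) : op.holds (a - b) c ↔ op.holds (a - c) b := by
  cases op <;> simp only [holds] <;> constructor <;> intro <;> linarith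

/-- `r ⋈ a` is encoded by lower endpoints `toLex (a, s)`, which must lie strictly below
`toLex (r, true)`, and upper endpoints `toLex (a, t)`, which must lie above it (see
`holds_iff_flags`): the flag `false` marks a non-strict lower and a strict upper bound. -/
def lowerFlags : CmpOp → List Bool
  | lt | le => []
  | eq | ge => [false]
  | gt => [true]

def upperFlags : CmpOp → List Bool
  | lt => [false]
  | le | eq => [true]
  | ge | gt => []

theorem holds_iff_flags (op : CmpOp) (r a : ℝ) :
    op.holds r a ↔ (∀ s ∈ op.lowerFlags, toLex (a, s) < toLex (r, true)) ∧
      ∀ t ∈ op.upperFlags, toLex (r, true) ≤ toLex (a, t) := by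
  cases op <;> simp +decide [holds, lowerFlags, upperFlags, Prod.Lex.toLex_lt_toLex,
    le_iff_lt_or_eq]
  grind

end CmpOp

section LexBool

variable {α : Type*} [LinearOrder α]

theorem toLex_lt_toLex_bool {a b : α} {s t : Bool} :
    toLex (a, s) < toLex (b, t) ↔ if s < t then a ≤ b else a < b := by
  cases s <;> cases t <;> simp +decide [Prod.Lex.toLex_lt_toLex, le_iff_lt_or_eq]

theorem exists_toLex_true_between [DenselyOrdered α] {ℓ μ : α ×ₗ Bool} (h : ℓ < μ) :
    ∃ r : α, ℓ < toLex (r, true) ∧ toLex (r, true) ≤ μ := by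
  obtain ⟨⟨a, s⟩, rfl⟩ := toLex.surjective ℓ
  obtain ⟨⟨b, t⟩, rfl⟩ := toLex.surjective μ
  simp only [Prod.Lex.toLex_lt_toLex, Prod.Lex.toLex_le_toLex]
  cases s <;> cases t <;> simp +decide [toLex_lt_toLex_bool] at h
  · exact ⟨a, by simp +decide [h]⟩
  · exact ⟨a, by simp +decide [lt_or_eq_of_le h]⟩
  · obtain ⟨r, har, hrb⟩ := exists_between h
    exact ⟨r, by simp [har, hrb]⟩
  · exact ⟨b, by simp [h]⟩

theorem exists_forall_lt_toLex_le [DenselyOrdered α] [NoMaxOrder α] {L U : Finset (α ×ₗ Bool)}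
    (hL : L.Nonempty) (h : ∀ ℓ ∈ L, ∀ μ ∈ U, ℓ < μ) :
    ∃ r : α, (∀ ℓ ∈ L, ℓ < toLex (r, true)) ∧ ∀ μ ∈ U, toLex (r, true) ≤ μ := by
  rcases U.eq_empty_or_nonempty with rfl | hU
  · obtain ⟨r, hr⟩ := exists_gt (ofLex (L.max' hL)).1
    exact ⟨r, fun ℓ hℓ => (L.le_max' ℓ hℓ).trans_lt (Prod.Lex.lt_iff.2 (Or.inl hr)), by simp⟩
  · obtain ⟨r, h₁, h₂⟩ := exists_toLex_true_between (h _ (L.max'_mem hL) _ (U.min'_mem hU))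
    exact ⟨r, fun ℓ hℓ => (L.le_max' ℓ hℓ).trans_lt h₁, fun μ hμ => h₂.trans (U.min'_le μ hμ)⟩

end LexBool

theorem exists_nonneg_forall_holds_iff (L : List (CmpOp × ℝ)) :
    (∃ r : NNReal, ∀ p ∈ L, p.1.holds r p.2) ↔
      ∀ p ∈ (CmpOp.ge, 0) :: L, ∀ q ∈ (CmpOp.ge, 0) :: L, ∀ s ∈ p.1.lowerFlags,
        ∀ t ∈ q.1.upperFlags, toLex (p.2, s) < toLex (q.2, t) := by
  have nonneg : (∃ r : NNReal, ∀ p ∈ L, p.1.holds r p.2) ↔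
      ∃ r : ℝ, ∀ p ∈ (CmpOp.ge, 0) :: L, p.1.holds r p.2 := by
    simp only [List.forall_mem_cons, CmpOp.holds, ge_iff_le]
    exact ⟨fun ⟨r, hr⟩ => ⟨r, r.2, hr⟩, fun ⟨r, hr, hL⟩ => ⟨⟨r, hr⟩, hL⟩⟩
  rw [nonneg]
  set L' := (CmpOp.ge, (0 : ℝ)) :: L
  constructor
  · rintro ⟨r, hr⟩ p hp q hq s hs t ht
    exact (((p.1.holds_iff_flags r p.2).1 (hr p hp)).1 s hs).trans_le
      (((q.1.holds_iff_flags r q.2).1 (hr q hq)).2 t ht)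
  · intro h
    obtain ⟨r, hlow, hup⟩ := exists_forall_lt_toLex_le
      (L := (L'.flatMap fun p => p.1.lowerFlags.map fun s => toLex (p.2, s)).toFinset)
      (U := (L'.flatMap fun q => q.1.upperFlags.map fun t => toLex (q.2, t)).toFinset)
      ⟨toLex (0, false), by simp [L', CmpOp.lowerFlags]⟩
      (by simp only [List.mem_toFinset, List.mem_flatMap, List.mem_map]
          rintro _ ⟨p, hp, s, hs, rfl⟩ _ ⟨q, hq, t, ht, rfl⟩
          exact h p hp q hq s hs t ht)
    refine ⟨r, fun p hp => (p.1.holds_iff_flags r p.2).2 ⟨fun s hs => hlow _ ?_, fun t ht => hup _ ?_⟩⟩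
    · exact List.mem_toFinset.2 (List.mem_flatMap.2 ⟨p, hp, List.mem_map.2 ⟨s, hs, rfl⟩⟩)
    · exact List.mem_toFinset.2 (List.mem_flatMap.2 ⟨p, hp, List.mem_map.2 ⟨t, ht, rfl⟩⟩)

def termVal (v : Val X) (t : Option X) : ℝ := t.elim 0 fun x => v x

def extendVal (v : Val X) (r : NNReal) : Val (Option X) := fun t => t.elim r v

/-- `⟨op, t, c⟩` stands for the comparison `r ⋈ t + c` of the clock `r = none` of `Option X`
with the clock `t` of `X`, or with `0` if `t = none`. -/
structure Bound (X : Type) where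
  op : CmpOp
  term : Option X
  const : ℤ

def Bound.eval (v : Val X) (b : Bound X) : ℝ := termVal v b.term + b.const

namespace ClockConstraint

def all : List (ClockConstraint X) → ClockConstraint X := List.foldr conj tt

theorem sat_all (l : List (ClockConstraint X)) (v : Val X) :
    (all l).sat v ↔ ∀ g ∈ l, g.sat v := by
  induction l with
  | nil => simp [all, sat]
  | cons g l ih => simp [all, sat, ← ih]

section

variable [Nonempty X]

noncomputable def ofProp (p : Prop) : ClockConstraint X :=
  if p then tt else single (Classical.arbitrary X) .lt 0

theorem sat_ofProp (p : Prop) (v : Val X) : (ofProp p).sat v ↔ p := by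
  unfold ofProp
  split_ifs with hp <;> simp [sat, CmpOp.holds, hp]

noncomputable def ofDiff : Option X → Option X → CmpOp → ℤ → ClockConstraint X
  | some x, some y, op, c => diag x y op c
  | some x, none, op, c => single x op c
  | none, some y, op, c => single y op.swap (-c)
  | none, none, op, c => ofProp (op.holds 0 c)

theorem sat_ofDiff (t₁ t₂ : Option X) (op : CmpOp) (c : ℤ) (v : Val X) :
    (ofDiff t₁ t₂ op c).sat v ↔ op.holds (termVal v t₁ - termVal v t₂) c := by
  cases t₁ <;> cases t₂ <;> simp only [ofDiff, sat, sat_ofProp, termVal, Option.elim]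
  · simp
  · rw [CmpOp.holds_swap, CmpOp.holds_sub_comm]
    simp
  · simp

noncomputable def withoutNone : ClockConstraint (Option X) → ClockConstraint X
  | single (some x) op c => single x op c
  | diag (some x) (some y) op c => diag x y op c
  | diag none none op c => ofProp (op.holds 0 c)
  | conj g h => conj g.withoutNone h.withoutNone
  | _ => tt

end

def noneBounds : ClockConstraint (Option X) → List (Bound X)
  | single none op c => [⟨op, none, c⟩]
  | diag none (some y) op c => [⟨op, some y, c⟩]
  | diag (some x) none op c => [⟨op.swap, some x, -c⟩]
  | conj g h => g.noneBounds ++ h.noneBounds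
  | _ => []

theorem sat_extendVal_iff [Nonempty X] (g : ClockConstraint (Option X)) (v : Val X) (r : NNReal) :
    g.sat (extendVal v r) ↔ g.withoutNone.sat v ∧ ∀ b ∈ g.noneBounds, b.op.holds r (b.eval v) := by
  induction g with
  | tt => simp [sat, withoutNone, noneBounds]
  | single t op c =>
    cases t <;> simp [sat, withoutNone, noneBounds, extendVal, Bound.eval, termVal]
  | diag t₁ t₂ op c =>
    rcases t₁ with _ | x <;> rcases t₂ with _ | y <;>
      simp only [sat, withoutNone, noneBounds, extendVal, Bound.eval, termVal, Option.elim,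
        sat_ofProp, List.mem_singleton, List.not_mem_nil, forall_eq, IsEmpty.forall_iff,
        implies_true, and_true, true_and]
    · simp
    · rw [CmpOp.holds_sub_iff]
    · rw [CmpOp.holds_swap, CmpOp.holds_sub_comm]
      simp [sub_eq_add_neg]
  | conj g h ihg ihh =>
    simp only [sat, withoutNone, noneBounds, ihg, ihh, List.mem_append, or_imp, forall_and]
    tauto

section

variable [Nonempty X]

noncomputable def endpointLt (b₁ : Bound X) (s : Bool) (b₂ : Bound X) (t : Bool) :
    ClockConstraint X :=
  ofDiff b₁.term b₂.term (if s < t then .le else .lt) (b₂.const - b₁.const)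

theorem sat_endpointLt (b₁ : Bound X) (s : Bool) (b₂ : Bound X) (t : Bool) (v : Val X) :
    (endpointLt b₁ s b₂ t).sat v ↔ toLex (b₁.eval v, s) < toLex (b₂.eval v, t) := by
  rw [endpointLt, sat_ofDiff, toLex_lt_toLex_bool, Bound.eval, Bound.eval]
  split_ifs <;> simp only [CmpOp.holds] <;> push_cast <;> constructor <;> intro <;> linarith

/-- Fourier–Motzkin elimination of the clock `none`. -/
noncomputable def projNone (g : ClockConstraint (Option X)) : ClockConstraint X :=
  let L : List (Bound X) := ⟨.ge, none, 0⟩ :: g.noneBounds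
  conj g.withoutNone <| all <| L.flatMap fun b₁ => L.flatMap fun b₂ =>
    b₁.op.lowerFlags.flatMap fun s => b₂.op.upperFlags.map fun t => endpointLt b₁ s b₂ t

theorem sat_projNone (g : ClockConstraint (Option X)) (v : Val X) :
    (projNone g).sat v ↔ ∃ r : NNReal, g.sat (extendVal v r) := by
  have nonneg : ((CmpOp.ge, 0) :: g.noneBounds.map fun b => (b.op, b.eval v)) =
      (⟨.ge, none, 0⟩ :: g.noneBounds).map fun b => (b.op, b.eval v) := by
    simp [Bound.eval, termVal]
  have := exists_nonneg_forall_holds_iff (g.noneBounds.map fun b => (b.op, b.eval v))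
  simp only [nonneg, List.forall_mem_map] at this
  simp only [sat_extendVal_iff, exists_and_left, this, projNone, sat, sat_all,
    List.forall_mem_flatMap, List.forall_mem_map, sat_endpointLt]

end

def map (m : X → X') : ClockConstraint X → ClockConstraint X'
  | tt => tt
  | single x op c => single (m x) op c
  | diag x y op c => diag (m x) (m y) op c
  | conj g h => conj (g.map m) (h.map m)

theorem sat_map (m : X → X') (g : ClockConstraint X) (u : Val X') :
    (g.map m).sat u ↔ g.sat (u ∘ m) := by
  induction g <;> simp [map, sat, *]

/-- Reads each clock of `X` relative to the clock `none`, which records the elapsed time. -/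
def shift : ClockConstraint X → ClockConstraint (Option X)
  | tt => tt
  | single x op c => diag (some x) none op c
  | diag x y op c => diag (some x) (some y) op c
  | conj g h => conj g.shift h.shift

theorem sat_shift (g : ClockConstraint X) (v : Val X) (δ : NNReal) :
    g.shift.sat (extendVal (addVal v δ) δ) ↔ g.sat v := by
  induction g <;> simp [shift, sat, extendVal, addVal, *]

end ClockConstraint

open ClockConstraint

theorem isZone_sem (g : ClockConstraint X) : IsZone (sem g) := ⟨g, rfl⟩

theorem isZone_inter {Z Z' : Set (Val X)} (hZ : IsZone Z) (hZ' : IsZone Z') :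
    IsZone (Z ∩ Z') := by
  obtain ⟨g, rfl⟩ := hZ
  obtain ⟨g', rfl⟩ := hZ'
  exact ⟨conj g g', rfl⟩

theorem isZone_iInter {ι : Type*} [Finite ι] {Z : ι → Set (Val X)} (hZ : ∀ i, IsZone (Z i)) :
    IsZone (⋂ i, Z i) := by
  choose g hg using hZ
  have := Fintype.ofFinite ι
  refine ⟨all (Finset.univ.toList.map g), ?_⟩
  ext v
  simp [sem, sat_all, hg]

theorem isZone_setOf_le (x y : X) : IsZone {v : Val X | v x ≤ v y} :=
  ⟨diag x y .le 0, by ext; simp [sem, sat, CmpOp.holds]⟩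

theorem isZone_setOf_eq_zero (x : X) : IsZone {v : Val X | v x = 0} :=
  ⟨single x .eq 0, by ext; simp [sem, sat, CmpOp.holds]⟩

theorem isZone_preimage_comp (m : X → X') {Z : Set (Val X)} (hZ : IsZone Z) :
    IsZone ((· ∘ m) ⁻¹' Z : Set (Val X')) := by
  obtain ⟨g, rfl⟩ := hZ
  exact ⟨g.map m, by ext; simp [sem, sat_map]⟩

theorem isZone_exists_extendVal [Nonempty X] {Z : Set (Val (Option X))} (hZ : IsZone Z) :
    IsZone {v | ∃ r, extendVal v r ∈ Z} := by
  obtain ⟨g, rfl⟩ := hZ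
  exact ⟨g.projNone, by ext; simp [sem, sat_projNone]⟩

theorem isZone_exists_update (x : X) {Z : Set (Val X)} (hZ : IsZone Z) :
    IsZone {w | ∃ r, Function.update w x r ∈ Z} := by
  have : Nonempty X := ⟨x⟩
  have update_eq (w : Val X) (r : NNReal) :
      Function.update w x r = extendVal w r ∘ fun y => if y = x then none else some y := by
    funext y
    by_cases hy : y = x <;> simp [extendVal, hy]
  simp only [update_eq]
  exact isZone_exists_extendVal (isZone_preimage_comp _ hZ)

theorem resetSet_insert (x : X) (Y : Set X) (Z : Set (Val X)) :
    resetSet (insert x Y) Z = resetSet {x} (resetSet Y Z) := by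
  have (v : Val X) : resetVal (insert x Y) v = resetVal {x} (resetVal Y v) := by
    funext y
    by_cases hy : y = x <;> simp [resetVal, hy]
  simp only [resetSet, Set.image_image, this]

theorem resetSet_singleton (x : X) (Z : Set (Val X)) :
    resetSet {x} Z = {w | w x = 0} ∩ {w | ∃ r, Function.update w x r ∈ Z} := by
  ext w
  constructor
  · rintro ⟨v, hv, rfl⟩
    refine ⟨by simp [resetVal], v x, ?_⟩
    convert hv
    funext y
    by_cases hy : y = x <;> simp [resetVal, hy]
  · rintro ⟨hw, r, hr⟩
    refine ⟨_, hr, ?_⟩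
    funext y
    by_cases hy : y = x <;> simp_all [resetVal]

theorem isZone_resetSet {Y : Set X} (hY : Y.Finite) {Z : Set (Val X)} (hZ : IsZone Z) :
    IsZone (resetSet Y Z) := by
  induction Y, hY using Set.Finite.induction_on with
  | empty =>
    have : resetVal ∅ = @id (Val X) := funext fun v => funext fun x => if_neg (Set.notMem_empty x)
    rwa [resetSet, this, Set.image_id]
  | @insert x Y _ _ ih =>
    rw [resetSet_insert, resetSet_singleton]
    exact isZone_inter (isZone_setOf_eq_zero x) (isZone_exists_update x ih)

theorem future_eq_self [IsEmpty X] (Z : Set (Val X)) : future Z = Z := by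
  ext w
  constructor
  · rintro ⟨v, hv, δ, rfl⟩
    rwa [Subsingleton.elim (addVal v δ) v]
  · exact fun hw => ⟨w, hw, 0, Subsingleton.elim _ _⟩

theorem future_sem (g : ClockConstraint X) :
    future (sem g) = {w | ∃ δ, extendVal w δ ∈ sem g.shift ∩ ⋂ x, {u | u none ≤ u (some x)}} := by
  ext w
  constructor
  · rintro ⟨v, hv, δ, rfl⟩
    exact ⟨δ, (sat_shift g v δ).2 hv, Set.mem_iInter.2 fun x => (le_add_self : δ ≤ v x + δ)⟩
  · rintro ⟨δ, hw, hδ⟩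
    have hδ (x : X) : δ ≤ w x := Set.mem_iInter.1 hδ x
    have hwv : addVal (fun x => w x - δ) δ = w := funext fun x => tsub_add_cancel_of_le (hδ x)
    rw [← hwv] at hw
    exact ⟨_, (sat_shift g _ δ).1 hw, δ, hwv.symm⟩

theorem isZone_future [Finite X] {Z : Set (Val X)} (hZ : IsZone Z) : IsZone (future Z) := by
  rcases isEmpty_or_nonempty X with hX | hX
  · rwa [future_eq_self]
  obtain ⟨g, rfl⟩ := hZ
  rw [future_sem]
  exact isZone_exists_extendVal <|
    isZone_inter (isZone_sem _) (isZone_iInter fun x => isZone_setOf_le none (some x))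

end Timed

/-- zones are closed under intersection, reset and future. -/
theorem zones_closed_under_operations {X : Type} [Fintype X]
    {Z Z' : Set (Val X)} (hZ : IsZone Z) (hZ' : IsZone Z') :
    IsZone (Z ∩ Z') ∧ (∀ Y : Set X, IsZone (resetSet Y Z)) ∧ IsZone (future Z) :=
  ⟨isZone_inter hZ hZ', fun Y => isZone_resetSet Y.toFinite hZ, isZone_future hZ⟩
end

section
/- The exact forward analysis is complete: for every timed automaton A, if a configuration (q, v) is reachable in A, then there is a symbolic state (q, Z) in the set S of reachable symbolic states of A with v ∈ Z. -/
open Classical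

open Timed

/-- completeness of the exact forward analysis. -/
theorem forward_analysis_complete {Q X : Type} [Fintype Q] [Fintype X]
    (A : Automaton Q X) (hT : A.trans.Finite)
    {q : Q} {v : Val X} (h : Reachable A (q, v)) :
    ∃ Z : Set (Val X), SymbReach A (q, Z) ∧ v ∈ Z := by
  have key : ∀ c : Q × Val X, Reachable A c →
      ∃ Z : Set (Val X), SymbReach A (c.1, Z) ∧ c.2 ∈ Z ∧
        (∀ w ∈ Z, ∀ δ : NNReal, addVal w δ ∈ Z) := by
    intro c hc
    induction hc with
    | refl =>
      refine ⟨initZone X, SymbReach.init, ⟨zeroVal X, rfl, 0, ?_⟩, ?_⟩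
      · funext x; simp [addVal, zeroVal]
      · rintro w ⟨u, hu, δ, rfl⟩ δ'
        exact ⟨u, hu, δ + δ', by funext x; simp [addVal, add_assoc]⟩
    | tail hstep hlast ih =>
      rename_i b c' _
      obtain ⟨Z, hS, hv, hcl⟩ := ih
      cases hlast with
      | delay q₀ v₀ δ => exact ⟨Z, hS, hcl _ hv δ, hcl⟩
      | disc ht hg =>
        rename_i q₀ v₀ g R q₁
        have hmem : resetVal R v₀ ∈ Post (q₀, g, R, q₁) Z :=
          ⟨v₀, hv, 0, hg, by funext x; simp [addVal]⟩
        refine ⟨Post (q₀, g, R, q₁) Z, SymbReach.step hS ht ?_, hmem, ?_⟩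
        · intro hemp; rw [hemp] at hmem; exact hmem
        · rintro w ⟨u, hu, δ, hgu, rfl⟩ δ'
          exact ⟨u, hu, δ + δ', hgu, by funext x; simp [addVal, add_assoc]⟩
  obtain ⟨Z, hS, hv, _⟩ := key (q, v) h
  exact ⟨Z, hS, hv⟩
end

section
/- For every finite set of clocks X and every bound function K : X → ℕ, the set of K-bounded zones over X is finite. Consequently, every zone Z over X is contained in a smallest K-bounded zone: there is a K-bounded zone Z' with Z ⊆ Z' such that every K-bounded zone containing Z contains Z'. -/
/-!
A `K`-bounded constraint is a conjunction of atoms `x ⋈ c`, `x - y ⋈ c` whose constants lie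
in `[-N, N]` for `N = max K`; as `X` is finite there are only finitely many such atoms, so every
`K`-bounded zone is the intersection of a subset of one finite family of sets. Conjunction shows
that `K`-bounded zones are closed under finite intersections, so the intersection of the finitely
many `K`-bounded zones containing `Z` is the smallest one.
-/

open Classical

open Timed
open Set

instance : Finite CmpOp :=
  Finite.of_surjective ![.lt, .le, .eq, .ge, .gt] <| by
    rintro (_ | _ | _ | _ | _)
    exacts [⟨0, rfl⟩, ⟨1, rfl⟩, ⟨2, rfl⟩, ⟨3, rfl⟩, ⟨4, rfl⟩]

namespace Timed

variable {X : Type}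

def boundedAtoms (N : ℤ) : Set (Set (Val X)) :=
  ((fun p : X × CmpOp × ℤ => sem (.single p.1 p.2.1 p.2.2)) '' (univ ×ˢ univ ×ˢ Icc (-N) N)) ∪
  ((fun p : (X × X) × CmpOp × ℤ => sem (.diag p.1.1 p.1.2 p.2.1 p.2.2)) ''
    (univ ×ˢ univ ×ˢ Icc (-N) N))

theorem boundedAtoms_finite [Finite X] (N : ℤ) : (boundedAtoms (X := X) N).Finite :=
  .union (.image _ (finite_univ.prod (finite_univ.prod (finite_Icc _ _))))
    (.image _ (finite_univ.prod (finite_univ.prod (finite_Icc _ _))))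

theorem sem_conj (g₁ g₂ : ClockConstraint X) : sem (.conj g₁ g₂) = sem g₁ ∩ sem g₂ := rfl

theorem sem_tt : sem (.tt : ClockConstraint X) = univ := rfl

theorem KBounded.exists_subset_boundedAtoms {K : X → ℕ} {N : ℤ} (hKN : ∀ x, (K x : ℤ) ≤ N)
    {g : ClockConstraint X} (hg : KBounded K g) :
    ∃ T ⊆ boundedAtoms N, sem g = ⋂₀ T := by
  induction g with
  | tt => exact ⟨∅, empty_subset _, by rw [sInter_empty, sem_tt]⟩
  | single x op c =>
    have hc : c ∈ Icc (-N) N := by obtain ⟨_, _⟩ := hg; have := hKN x; constructor <;> omega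
    exact ⟨{sem (.single x op c)},
      singleton_subset_iff.2 (.inl ⟨(x, op, c), ⟨trivial, trivial, hc⟩, rfl⟩),
      (sInter_singleton _).symm⟩
  | diag x y op c =>
    have hc : c ∈ Icc (-N) N := by
      obtain ⟨_, _⟩ := hg; have := hKN x; have := hKN y; constructor <;> omega
    exact ⟨{sem (.diag x y op c)},
      singleton_subset_iff.2 (.inr ⟨((x, y), op, c), ⟨trivial, trivial, hc⟩, rfl⟩),
      (sInter_singleton _).symm⟩
  | conj g₁ g₂ ih₁ ih₂ =>
    obtain ⟨T₁, hT₁, h₁⟩ := ih₁ hg.1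
    obtain ⟨T₂, hT₂, h₂⟩ := ih₂ hg.2
    exact ⟨T₁ ∪ T₂, union_subset hT₁ hT₂, by rw [sem_conj, sInter_union, h₁, h₂]⟩

theorem finite_setOf_isKBoundedZone [Finite X] (K : X → ℕ) :
    {Z : Set (Val X) | IsKBoundedZone K Z}.Finite := by
  obtain ⟨N, hN⟩ := (finite_range K).bddAbove
  have hKN (x : X) : (K x : ℤ) ≤ N := by exact_mod_cast hN (mem_range_self x)
  refine ((boundedAtoms_finite (N : ℤ)).finite_subsets.image sInter).subset ?_
  rintro Z ⟨g, hg, rfl⟩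
  obtain ⟨T, hT, hgT⟩ := hg.exists_subset_boundedAtoms hKN
  exact ⟨T, hT, hgT.symm⟩

theorem isKBoundedZone_univ (K : X → ℕ) : IsKBoundedZone K (univ : Set (Val X)) :=
  ⟨.tt, trivial, sem_tt.symm⟩

theorem IsKBoundedZone.inter {K : X → ℕ} {Z₁ Z₂ : Set (Val X)} (h₁ : IsKBoundedZone K Z₁)
    (h₂ : IsKBoundedZone K Z₂) : IsKBoundedZone K (Z₁ ∩ Z₂) := by
  obtain ⟨g₁, hg₁, rfl⟩ := h₁
  obtain ⟨g₂, hg₂, rfl⟩ := h₂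
  exact ⟨.conj g₁ g₂, ⟨hg₁, hg₂⟩, sem_conj g₁ g₂⟩

theorem IsKBoundedZone.sInter {K : X → ℕ} {S : Set (Set (Val X))} (hS : S.Finite)
    (h : ∀ Z ∈ S, IsKBoundedZone K Z) : IsKBoundedZone K (⋂₀ S) := by
  induction S, hS using Set.Finite.induction_on with
  | empty => simpa only [sInter_empty] using isKBoundedZone_univ K
  | @insert Z S _ _ ih =>
    rw [sInter_insert]
    exact (h Z (mem_insert Z S)).inter (ih fun W hW => h W (mem_insert_of_mem Z hW))

theorem exists_smallest_isKBoundedZone_superset [Finite X] (K : X → ℕ) (Z : Set (Val X)) :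
    ∃ Z', IsKBoundedZone K Z' ∧ Z ⊆ Z' ∧
      ∀ Z'', IsKBoundedZone K Z'' → Z ⊆ Z'' → Z' ⊆ Z'' := by
  set F := {Z'' | IsKBoundedZone K Z'' ∧ Z ⊆ Z''}
  have hF : F.Finite := (finite_setOf_isKBoundedZone K).subset fun _ hW => hW.1
  exact ⟨⋂₀ F, .sInter hF fun _ hW => hW.1, subset_sInter fun _ hW => hW.2,
    fun Z'' h₁ h₂ => sInter_subset_of_mem ⟨h₁, h₂⟩⟩

end Timed

/-- there are finitely many `K`-bounded zones; consequently every zone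
is contained in a smallest `K`-bounded zone. -/
theorem kbounded_zones_finite_and_smallest {X : Type} [Fintype X] (K : X → ℕ) :
    {Z : Set (Val X) | IsKBoundedZone K Z}.Finite ∧
    ∀ Z : Set (Val X), IsZone Z →
      ∃ Z', IsKBoundedZone K Z' ∧ Z ⊆ Z' ∧
        ∀ Z'', IsKBoundedZone K Z'' → Z ⊆ Z'' → Z' ⊆ Z'' :=
  ⟨finite_setOf_isKBoundedZone K, fun Z _ => exists_smallest_isKBoundedZone_superset K Z⟩
end

section
/- For all natural numbers α, β, the zone Z_α is simulated by the zone Z_β with respect to the constraint set G = {x2 − x1 > 2, x4 − x3 < 2}: for every valuation v ∈ Z_α, the valuation v' defined by v'(x1) = v(x1), v'(x2) = v(x2), v'(x3) = v(x3) + 2(β − α), v'(x4) = v(x4) + 2(β − α) belongs to Z_β (in particular v' is nonnegative), and for every δ ∈ ℝ≥0 and every constraint φ ∈ G, v + δ satisfies φ if and only if v' + δ satisfies φ. -/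
open Classical

open Timed

/-- The zone `Z_α` over clocks `x1, x2, x3, x4` (indices `0..3`):
`1 ≤ x2−x1 ≤ 3`, `1 ≤ x4−x3 ≤ 3`, `x4−x2 = x3−x1 = 2α+5`. -/
def Zalpha (α : ℕ) : Set (Val (Fin 4)) :=
  {v | 1 ≤ (v 1 : ℝ) - (v 0 : ℝ) ∧ (v 1 : ℝ) - (v 0 : ℝ) ≤ 3 ∧
       1 ≤ (v 3 : ℝ) - (v 2 : ℝ) ∧ (v 3 : ℝ) - (v 2 : ℝ) ≤ 3 ∧
       (v 3 : ℝ) - (v 1 : ℝ) = 2 * (α : ℝ) + 5 ∧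
       (v 2 : ℝ) - (v 0 : ℝ) = 2 * (α : ℝ) + 5}

/-- `Z_α` is simulated by `Z_β` w.r.t. `G = {x2−x1 > 2, x4−x3 < 2}`. -/
theorem Zalpha_simulated_by_Zbeta (α β : ℕ) :
    ∀ v ∈ Zalpha α, ∃ v' : Val (Fin 4),
      (v' 0 : ℝ) = (v 0 : ℝ) ∧ (v' 1 : ℝ) = (v 1 : ℝ) ∧
      (v' 2 : ℝ) = (v 2 : ℝ) + 2 * ((β : ℝ) - (α : ℝ)) ∧
      (v' 3 : ℝ) = (v 3 : ℝ) + 2 * ((β : ℝ) - (α : ℝ)) ∧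
      v' ∈ Zalpha β ∧
      ∀ δ : NNReal,
        ((ClockConstraint.diag 1 0 CmpOp.gt 2).sat (addVal v δ) ↔
          (ClockConstraint.diag 1 0 CmpOp.gt 2).sat (addVal v' δ)) ∧
        ((ClockConstraint.diag 3 2 CmpOp.lt 2).sat (addVal v δ) ↔
          (ClockConstraint.diag 3 2 CmpOp.lt 2).sat (addVal v' δ)) := by
  intro v hv
  obtain ⟨h1, h2, h3, h4, h5, h6⟩ := hv
  have hv2 : (0:ℝ) ≤ (v 2 : ℝ) + 2 * ((β : ℝ) - (α : ℝ)) := by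
    have : (v 2 : ℝ) = (v 0 : ℝ) + (2 * (α : ℝ) + 5) := by linarith
    have h0 : (0:ℝ) ≤ (v 0 : ℝ) := (v 0).2
    have hb : (0:ℝ) ≤ (β : ℝ) := Nat.cast_nonneg β
    linarith
  have hv3 : (0:ℝ) ≤ (v 3 : ℝ) + 2 * ((β : ℝ) - (α : ℝ)) := by
    have h0 : (0:ℝ) ≤ (v 1 : ℝ) := (v 1).2
    have hb : (0:ℝ) ≤ (β : ℝ) := Nat.cast_nonneg β
    linarith
  refine ⟨![v 0, v 1, ((v 2 : ℝ) + 2 * ((β : ℝ) - (α : ℝ))).toNNReal,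
            ((v 3 : ℝ) + 2 * ((β : ℝ) - (α : ℝ))).toNNReal], ?_, ?_, ?_, ?_, ?_, ?_⟩
  · simp
  · simp
  · simp [Real.coe_toNNReal _ hv2]
  · simp [Real.coe_toNNReal _ hv3]
  · refine ⟨by simpa using h1, by simpa using h2, ?_, ?_, ?_, ?_⟩ <;>
      simp [Matrix.cons_val_zero, Matrix.cons_val_one,
        Real.coe_toNNReal _ hv2, Real.coe_toNNReal _ hv3] <;> linarith
  · intro δ
    constructor <;>
      simp [ClockConstraint.sat, CmpOp.holds, addVal,
        Real.coe_toNNReal _ hv2, Real.coe_toNNReal _ hv3] <;>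
      constructor <;> intro h <;> linarith
end

section
/- Intersection of a DBM with an atomic constraint: let M be a DBM in normal form, let g be the constraint x_i − x_j ≤ c for indices 0 ≤ i, j ≤ n and c ∈ ℤ, and suppose ⟦M⟧ ∩ ⟦g⟧ ≠ ∅. Then the DBM M' defined by m'_{k,ℓ} = min(m_{k,ℓ}, m_{k,i} + c + m_{j,ℓ}) for all 0 ≤ k, ℓ ≤ n satisfies ⟦M'⟧ = ⟦M⟧ ∩ ⟦g⟧, and M' is in normal form. -/
/-! Telescoping `v̄ₖ - v̄ₗ = (v̄ₖ - v̄ᵢ) + (v̄ᵢ - v̄ⱼ) + (v̄ⱼ - v̄ₗ)` shows that the new bounds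
`mₖᵢ + c + mⱼₗ` hold on `⟦M⟧ ∩ ⟦g⟧`, while `m'ᵢⱼ ≤ mᵢᵢ + c + mⱼⱼ ≤ c` forces `g` on `⟦M'⟧`.
A valuation in `⟦M'⟧` bounds the weight of every cycle of `M'` below by `0`, so `M'` has no
negative cycle; it also gives `0 ≤ mⱼᵢ + c`, with which each of the four combinations in
`m'ₖₘ + m'ₘₗ` dominates `m'ₖₗ`. A matrix satisfying the triangle inequality with nonpositive
diagonal is its own closure. -/

namespace DBMs

/-- A DBM over `n` clocks: an `(n+1)×(n+1)` matrix with entries in `ℤ ∪ {∞}`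
(all constraints are non-strict). -/
abbrev DBM (n : ℕ) := Fin (n+1) → Fin (n+1) → WithTop ℤ

/-- `v̄` extends a valuation by `v̄(x₀) = 0`. -/
def vbar {n : ℕ} (v : Fin n → NNReal) : Fin (n+1) → ℝ :=
  Fin.cases 0 (fun i => (v i : ℝ))

/-- `r ≤ m` for a real `r` and `m ∈ ℤ ∪ {∞}` (always true for `m = ∞`). -/
def rleq (r : ℝ) (m : WithTop ℤ) : Prop := ∀ c : ℤ, m = (c : WithTop ℤ) → r ≤ (c : ℝ)

/-- The zone `⟦M⟧` of a DBM. -/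
def dbmZone {n : ℕ} (M : DBM n) : Set (Fin n → NNReal) :=
  {v | ∀ i j : Fin (n+1), rleq (vbar v i - vbar v j) (M i j)}

/-- The weight of the path `c 0, c 1, …, c p` in the adjacency graph of `M`. -/
def pathWeight {n : ℕ} (M : DBM n) (p : ℕ) (c : ℕ → Fin (n+1)) : WithTop ℤ :=
  ∑ k ∈ Finset.range p, M (c k) (c (k+1))

/-- The adjacency graph of `M` has a cycle of finite, strictly negative weight. -/
def HasNegCycle {n : ℕ} (M : DBM n) : Prop :=
  ∃ (p : ℕ) (c : ℕ → Fin (n+1)), 1 ≤ p ∧ c p = c 0 ∧ pathWeight M p c < 0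

/-- `P` is the shortest-path closure `φ(M)`: each `P i j` is the minimum of the
weights of the finite paths from `i` to `j` in the adjacency graph of `M`. -/
def IsClosure {n : ℕ} (M P : DBM n) : Prop :=
  ∀ i j : Fin (n+1),
    IsLeast {w | ∃ (p : ℕ) (c : ℕ → Fin (n+1)), c 0 = i ∧ c p = j ∧ w = pathWeight M p c}
      (P i j)

/-- `M` is in normal form: no negative cycle and `M = φ(M)`. -/
def InNormalForm {n : ℕ} (M : DBM n) : Prop := ¬ HasNegCycle M ∧ IsClosure M M

/-- Future (time elapse) of a set of valuations. -/
def futureZ {n : ℕ} (W : Set (Fin n → NNReal)) : Set (Fin n → NNReal) :=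
  {w | ∃ v ∈ W, ∃ δ : NNReal, w = fun k => v k + δ}

end DBMs
open DBMs

namespace DBMs

variable {n : ℕ}

section rleq

variable {r s : ℝ} {a b : WithTop ℤ}

lemma rleq_coe_iff {d : ℤ} : rleq r d ↔ r ≤ d :=
  ⟨fun h => h d rfl, fun h _ he => WithTop.coe_inj.mp he ▸ h⟩

lemma rleq_of_le (hab : a ≤ b) (h : rleq r a) : rleq r b := by
  rintro e rfl
  obtain ⟨d, rfl, hde⟩ := WithTop.le_coe_iff.mp hab
  exact (h d rfl).trans (by exact_mod_cast hde)

lemma rleq_add (ha : rleq r a) (hb : rleq s b) : rleq (r + s) (a + b) := by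
  intro e he
  obtain ⟨d₁, d₂, rfl, rfl, rfl⟩ := WithTop.add_eq_coe.mp he
  push_cast
  exact add_le_add (ha d₁ rfl) (hb d₂ rfl)

lemma rleq_min (ha : rleq r a) (hb : rleq r b) : rleq r (min a b) := by
  rcases min_choice a b with h | h <;> rwa [h]

lemma nonneg_of_rleq_zero (h : rleq 0 a) : 0 ≤ a := by
  induction a with
  | top => exact le_top
  | coe d => exact_mod_cast rleq_coe_iff.mp h

end rleq

lemma pathWeight_zero (M : DBM n) (c : ℕ → Fin (n+1)) : pathWeight M 0 c = 0 :=
  Finset.sum_range_zero _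

lemma pathWeight_succ (M : DBM n) (p : ℕ) (c : ℕ → Fin (n+1)) :
    pathWeight M (p+1) c = pathWeight M p c + M (c p) (c (p+1)) :=
  Finset.sum_range_succ _ _

lemma rleq_pathWeight {M : DBM n} {v : Fin n → NNReal} (hv : v ∈ dbmZone M)
    (p : ℕ) (c : ℕ → Fin (n+1)) : rleq (vbar v (c 0) - vbar v (c p)) (pathWeight M p c) := by
  induction p with
  | zero => simpa [pathWeight_zero] using rleq_coe_iff (r := 0) (d := 0) |>.mpr Int.cast_zero.ge
  | succ p ih =>
    rw [pathWeight_succ, ← sub_add_sub_cancel _ (vbar v (c p))]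
    exact rleq_add ih (hv _ _)

lemma not_hasNegCycle_of_mem_dbmZone {M : DBM n} {v : Fin n → NNReal} (hv : v ∈ dbmZone M) :
    ¬ HasNegCycle M := by
  rintro ⟨p, c, -, hcycle, hneg⟩
  have := rleq_pathWeight hv p c
  rw [hcycle, sub_self] at this
  exact (nonneg_of_rleq_zero this).not_gt hneg

lemma le_pathWeight {M : DBM n} (htri : ∀ k m l, M k l ≤ M k m + M m l)
    (hdiag : ∀ k, M k k ≤ 0) (p : ℕ) (c : ℕ → Fin (n+1)) : M (c 0) (c p) ≤ pathWeight M p c := by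
  induction p with
  | zero => simpa [pathWeight_zero] using hdiag (c 0)
  | succ p ih =>
    rw [pathWeight_succ]
    exact (htri _ (c p) _).trans (add_le_add_left ih _)

lemma isClosure_self {M : DBM n} (htri : ∀ k m l, M k l ≤ M k m + M m l)
    (hdiag : ∀ k, M k k ≤ 0) : IsClosure M M := fun k l =>
  ⟨⟨1, fun t => if t = 0 then k else l, rfl, rfl, by simp [pathWeight]⟩,
    by rintro _ ⟨p, c, rfl, rfl, rfl⟩; exact le_pathWeight htri hdiag p c⟩

namespace IsClosure

variable {M P : DBM n}

lemma diag_nonpos (h : IsClosure M P) (k : Fin (n+1)) : P k k ≤ 0 :=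
  (h k k).2 ⟨0, fun _ => k, rfl, rfl, (pathWeight_zero M _).symm⟩

lemma le_add (h : IsClosure M P) (k m l : Fin (n+1)) : P k l ≤ M k m + M m l :=
  (h k l).2 ⟨2, fun t => if t = 0 then k else if t = 1 then m else l, rfl, rfl,
    by simp [pathWeight, Finset.sum_range_succ]⟩

end IsClosure

def tighten (M : DBM n) (i j : Fin (n+1)) (c : ℤ) : DBM n :=
  fun k l => min (M k l) (M k i + c + M j l)

variable {M : DBM n} {i j : Fin (n+1)} {c : ℤ}

lemma dbmZone_tighten (hdiag : ∀ k, M k k ≤ 0) :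
    dbmZone (tighten M i j c) = dbmZone M ∩ {v | vbar v i - vbar v j ≤ c} := by
  ext v
  constructor
  · intro hv
    refine ⟨fun k l => rleq_of_le (min_le_left _ _) (hv k l), ?_⟩
    have hij : tighten M i j c i j ≤ c := calc
      _ ≤ M i i + c + M j j := min_le_right _ _
      _ ≤ 0 + c + 0 := by gcongr <;> exact hdiag _
      _ = c := by simp
    exact rleq_coe_iff.mp (rleq_of_le hij (hv i j))
  · rintro ⟨hv, hg⟩ k l
    refine rleq_min (hv k l) ?_
    rw [← sub_add_sub_cancel _ (vbar v j), ← sub_add_sub_cancel _ (vbar v i)]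
    exact rleq_add (rleq_add (hv k i) (rleq_coe_iff.mpr hg)) (hv j l)

lemma tighten_diag_nonpos (hdiag : ∀ k, M k k ≤ 0) (k : Fin (n+1)) :
    tighten M i j c k k ≤ 0 :=
  (min_le_left _ _).trans (hdiag k)

lemma tighten_le_add (htri : ∀ k m l, M k l ≤ M k m + M m l) (hji : 0 ≤ M j i + c)
    (k m l : Fin (n+1)) :
    tighten M i j c k l ≤ tighten M i j c k m + tighten M i j c m l := by
  have hki := htri k m i
  have hjl := htri j m l
  have hjmi : 0 ≤ M j m + M m i + c := hji.trans (by gcongr; exact htri j m i)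
  unfold tighten
  rcases min_choice (M k m) (M k i + c + M j m) with h₁ | h₁ <;>
    rcases min_choice (M m l) (M m i + c + M j l) with h₂ | h₂ <;> rw [h₁, h₂]
  · exact (min_le_left _ _).trans (htri k m l)
  · refine (min_le_right _ _).trans ?_
    calc M k i + c + M j l ≤ M k m + M m i + c + M j l := by gcongr
      _ = _ := by ac_rfl
  · refine (min_le_right _ _).trans ?_
    calc M k i + c + M j l ≤ M k i + c + (M j m + M m l) := by gcongr
      _ = _ := by ac_rfl
  · refine (min_le_right _ _).trans ?_
    calc M k i + c + M j l = M k i + c + M j l + 0 := (add_zero _).symm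
      _ ≤ M k i + c + M j l + (M j m + M m i + c) := by gcongr
      _ = _ := by ac_rfl

end DBMs

/-- intersection of a normal-form DBM with an atomic constraint
`x_i - x_j ≤ c`. -/
theorem dbm_intersection {n : ℕ} (M : DBM n) (hM : InNormalForm M)
    (i j : Fin (n+1)) (c : ℤ) (M' : DBM n)
    (hM' : ∀ k l : Fin (n+1), M' k l = min (M k l) (M k i + (c : WithTop ℤ) + M j l))
    (hne : dbmZone M ∩ {v | vbar v i - vbar v j ≤ (c : ℝ)} ≠ ∅) :
    dbmZone M' = dbmZone M ∩ {v | vbar v i - vbar v j ≤ (c : ℝ)} ∧ InNormalForm M' := by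
  obtain rfl : M' = tighten M i j c := funext₂ hM'
  have hdiag := hM.2.diag_nonpos
  have hzone := dbmZone_tighten (i := i) (j := j) (c := c) hdiag
  obtain ⟨v, hvM, hvg⟩ := Set.nonempty_iff_ne_empty.mpr hne
  have hji : 0 ≤ M j i + c := by
    have := rleq_add (hvM j i) (rleq_coe_iff.mpr hvg)
    rw [sub_add_sub_cancel, sub_self] at this
    exact nonneg_of_rleq_zero this
  refine ⟨hzone, not_hasNegCycle_of_mem_dbmZone (hzone.ge ⟨hvM, hvg⟩), ?_⟩
  exact isClosure_self (tighten_le_add hM.2.le_add hji) (tighten_diag_nonpos hdiag)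
end

section
/- Completeness of forward analysis with simulation: let ≼ be a simulation on the configurations of a timed automaton A and let N be a ≼-saturated set of symbolic states. Then for every reachable configuration (q, v) of A there exist (q, Z) ∈ N and a valuation v' ∈ Z with (q, v) ≼ (q, v'). In particular, every reachable control state of A occurs as the state of some symbolic state in N. -/
open Classical

open Timed

/-- completeness of forward analysis with simulation. -/
theorem simulation_forward_complete {Q X : Type} [Fintype Q] [Fintype X]
    (A : Automaton Q X) (hT : A.trans.Finite)
    (R : (Q × Val X) → (Q × Val X) → Prop) (hR : IsSimulation A R)
    (N : Set (Q × Set (Val X))) (hNz : ∀ p ∈ N, IsZone p.2 ∧ p.2 ≠ ∅)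
    (hN : SimSaturated A R N) :
    (∀ (q : Q) (v : Val X), Reachable A (q, v) →
      ∃ Z, (q, Z) ∈ N ∧ ∃ v' ∈ Z, R (q, v) (q, v')) ∧
    (∀ (q : Q) (v : Val X), Reachable A (q, v) → ∃ Z, (q, Z) ∈ N) := by
  obtain ⟨hrefl, htrans, hsame, hcomp⟩ := hR
  have hadd0 : ∀ (v : Val X), addVal v 0 = v := by
    intro v; funext x; simp [addVal]
  have haddadd : ∀ (v : Val X) (δ δ' : NNReal),
      addVal (addVal v δ) δ' = addVal v (δ + δ') := by
    intro v δ δ'; funext x; simp [addVal, add_assoc]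
  have key : ∀ q v, Reachable A (q, v) →
      ∃ Z, (q, Z) ∈ N ∧ ∀ δ : NNReal, ∃ v' ∈ Z, R (q, addVal v δ) (q, v') := by
    intro q v hreach
    have : ∀ c : Q × Val X, Reachable A c →
        ∃ Z, (c.1, Z) ∈ N ∧ ∀ δ : NNReal, ∃ v' ∈ Z, R (c.1, addVal c.2 δ) (c.1, v') := by
      intro c hc
      induction hc with
      | refl =>
          obtain ⟨Z'', hZN, hZ⟩ := hN.1
          refine ⟨Z'', hZN, fun δ => ?_⟩
          have hmem : addVal (zeroVal X) δ ∈ initZone X := ⟨zeroVal X, rfl, δ, rfl⟩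
          exact hZ _ hmem
      | tail hab hstep ih =>
          obtain ⟨Z, hZN, hZ⟩ := ih
          cases hstep with
          | delay q' v' δ =>
              refine ⟨Z, hZN, fun δ' => ?_⟩
              rw [haddadd]
              exact hZ (δ + δ')
          | disc ht hg =>
              rename_i q' v' g Y q₁
              obtain ⟨w, hwZ, hRw⟩ := hZ 0
              rw [hadd0] at hRw
              obtain ⟨hgw, hRres⟩ := (hcomp _ _ _ hRw).2 g Y q₁ ht hg
              have hPostne : Post (q', g, Y, q₁) Z ≠ ∅ := by
                intro hemp
                have : resetVal Y w ∈ Post (q', g, Y, q₁) Z :=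
                  ⟨w, hwZ, 0, hgw, (hadd0 _).symm⟩
                rw [hemp] at this; exact this
              obtain ⟨Z'', hZ''N, hZ''⟩ := hN.2 q' Z hZN g Y q₁ ht hPostne
              refine ⟨Z'', hZ''N, fun δ => ?_⟩
              have hmem : addVal (resetVal Y w) δ ∈ Post (q', g, Y, q₁) Z :=
                ⟨w, hwZ, δ, hgw, rfl⟩
              obtain ⟨w', hw'Z, hRw'⟩ := hZ'' _ hmem
              have hstep' := (hcomp _ _ _ hRres).1 δ
              exact ⟨w', hw'Z, htrans _ _ _ hstep' hRw'⟩
    exact this (q, v) hreach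
  constructor
  · intro q v hreach
    obtain ⟨Z, hZN, hZ⟩ := key q v hreach
    obtain ⟨v', hv', hRv⟩ := hZ 0
    rw [hadd0] at hRv
    exact ⟨Z, hZN, v', hv', hRv⟩
  · intro q v hreach
    obtain ⟨Z, hZN, _⟩ := key q v hreach
    exact ⟨Z, hZN⟩
end
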